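/- For natural numbers m, n ≥ 0, the symmetric bibasic identity holds: ∑_{k=0}^{m} (-1)^k p^{k(k+1)/2} / ((p;p)_k (p;p)_{m-k} (x p^k; q)_{n+1}) = ∑_{k=0}^{n} (-1)^k q^{k(k+1)/2} / ((q;q)_k (q;q)_{n-k} (x q^k; p)_{m+1}), as rational functions in x, p, q. -/

import Mathlib

/-! Both sides equal the double sum `∑ₖ ∑ⱼ cₚ(m,k) c_q(n,j) / (1 - x pᵏ qʲ)`, where
`c_q(n,j) = (-1)ʲ q^(j(j+1)/2) / ((q;q)ⱼ (q;q)ₙ₋ⱼ)`: this is what one gets on expanding each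
`1 / (x pᵏ; q)ₙ₊₁` (resp. `1 / (x qʲ; p)ₘ₊₁`) into partial fractions. The partial fraction expansion
of `1 / (y;q)ₙ₊₁` follows by induction on `n` from
`1 / (y;q)ₙ₊₂ = (1 / (y;q)ₙ₊₁ - qⁿ⁺¹ / (yq;q)ₙ₊₁) / (1 - qⁿ⁺¹)`,
the coefficients recombining by the `q`-Pascal rule. -/

/-- The q-Pochhammer symbol `(a;q)_n = ∏_{j=0}^{n-1} (1 - a q^j)`. -/
noncomputable def qPoch (a q : ℂ) (n : ℕ) : ℂ := ∏ j ∈ Finset.range n, (1 - a * q ^ j)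

open Finset

lemma qPoch_succ (a q : ℂ) (n : ℕ) : qPoch a q (n + 1) = qPoch a q n * (1 - a * q ^ n) :=
  prod_range_succ _ _

lemma qPoch_succ' (a q : ℂ) (n : ℕ) : qPoch a q (n + 1) = (1 - a) * qPoch (a * q) q n := by
  simp only [qPoch, prod_range_succ', pow_zero, mul_one, pow_succ, mul_assoc, mul_comm]

lemma qPoch_ne_zero_iff {a q : ℂ} {n : ℕ} : qPoch a q n ≠ 0 ↔ ∀ j < n, 1 - a * q ^ j ≠ 0 := by
  simp [qPoch, prod_ne_zero_iff]

lemma triangle_succ_div_two (j : ℕ) : (j + 1) * (j + 2) / 2 = j * (j + 1) / 2 + (j + 1) := by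
  rw [show (j + 1) * (j + 2) = j * (j + 1) + 2 * (j + 1) by ring, Nat.add_mul_div_left _ _ two_pos]

noncomputable def qPartialFracCoeff (q : ℂ) (n j : ℕ) : ℂ :=
  (-1) ^ j * q ^ (j * (j + 1) / 2) / (qPoch q q j * qPoch q q (n - j))

section PartialFractions

variable {q : ℂ}

lemma one_sub_pow_ne_zero (hq : ∀ j, 1 ≤ j → q ^ j ≠ 1) {j : ℕ} (hj : 1 ≤ j) :
    1 - q ^ j ≠ 0 :=
  sub_ne_zero.mpr (hq j hj).symm

lemma qPoch_self_ne_zero (hq : ∀ j, 1 ≤ j → q ^ j ≠ 1) (k : ℕ) : qPoch q q k ≠ 0 :=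
  qPoch_ne_zero_iff.mpr fun j _ => by
    simpa [← pow_succ'] using one_sub_pow_ne_zero hq (Nat.succ_pos j)

lemma qPartialFracCoeff_succ_zero (hq : ∀ j, 1 ≤ j → q ^ j ≠ 1) (n : ℕ) :
    qPartialFracCoeff q (n + 1) 0 = qPartialFracCoeff q n 0 / (1 - q ^ (n + 1)) := by
  have := one_sub_pow_ne_zero hq (Nat.succ_pos n)
  have := qPoch_self_ne_zero hq n
  simp only [qPartialFracCoeff, qPoch_succ q q n, Nat.sub_zero, pow_zero, ← pow_succ']
  field_simp

lemma qPartialFracCoeff_succ_self (hq : ∀ j, 1 ≤ j → q ^ j ≠ 1) (n : ℕ) :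
    qPartialFracCoeff q (n + 1) (n + 1) =
      -q ^ (n + 1) * qPartialFracCoeff q n n / (1 - q ^ (n + 1)) := by
  have := one_sub_pow_ne_zero hq (Nat.succ_pos n)
  have := qPoch_self_ne_zero hq n
  simp only [qPartialFracCoeff, qPoch_succ q q n, Nat.sub_self, ← pow_succ', triangle_succ_div_two]
  field_simp
  ring

lemma qPartialFracCoeff_succ_succ (hq : ∀ j, 1 ≤ j → q ^ j ≠ 1) {n j : ℕ} (hj : j < n) :
    qPartialFracCoeff q (n + 1) (j + 1) =
      (qPartialFracCoeff q n (j + 1) - q ^ (n + 1) * qPartialFracCoeff q n j) /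
        (1 - q ^ (n + 1)) := by
  obtain ⟨d, rfl⟩ := Nat.exists_eq_add_of_lt hj
  have := one_sub_pow_ne_zero hq (Nat.succ_pos (j + d + 1))
  have := one_sub_pow_ne_zero hq (Nat.succ_pos j)
  have := one_sub_pow_ne_zero hq (Nat.succ_pos d)
  have := qPoch_self_ne_zero hq j
  have := qPoch_self_ne_zero hq d
  have e1 : j + d + 1 + 1 - (j + 1) = d + 1 := by omega
  have e2 : j + d + 1 - (j + 1) = d := by omega
  have e3 : j + d + 1 - j = d + 1 := by omega
  simp only [qPartialFracCoeff, e1, e2, e3, qPoch_succ q q j, qPoch_succ q q d, ← pow_succ',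
    triangle_succ_div_two]
  field_simp
  ring

lemma one_div_qPoch_add_two {y : ℂ} {n : ℕ} (hy : qPoch y q (n + 2) ≠ 0)
    (hq : 1 - q ^ (n + 1) ≠ 0) :
    1 / qPoch y q (n + 2) =
      (1 / qPoch y q (n + 1) - q ^ (n + 1) * (1 / qPoch (y * q) q (n + 1))) /
        (1 - q ^ (n + 1)) := by
  simp only [qPoch_succ' y q, qPoch_succ (y * q) q n, mul_assoc, ← pow_succ'] at hy ⊢
  obtain ⟨h1, h2, h3⟩ : 1 - y ≠ 0 ∧ qPoch (y * q) q n ≠ 0 ∧ 1 - y * q ^ (n + 1) ≠ 0 := by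
    simpa [not_or] using hy
  field_simp
  ring

lemma one_div_qPoch_eq_sum (hq : ∀ j, 1 ≤ j → q ^ j ≠ 1) (n : ℕ) {y : ℂ}
    (hy : ∀ j ≤ n, 1 - y * q ^ j ≠ 0) :
    1 / qPoch y q (n + 1) = ∑ j ∈ range (n + 1), qPartialFracCoeff q n j / (1 - y * q ^ j) := by
  induction n generalizing y with
  | zero => simp [qPoch, qPartialFracCoeff]
  | succ n ih =>
    have hD := one_sub_pow_ne_zero hq (Nat.succ_pos n)
    have hy' : qPoch y q (n + 2) ≠ 0 := qPoch_ne_zero_iff.mpr fun j hj => hy j (by omega)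
    have expand_y := ih fun j hj => hy j (by omega)
    have expand_yq := ih (y := y * q) fun j hj => by
      simpa [mul_assoc, ← pow_succ'] using hy (j + 1) (by omega)
    simp only [mul_assoc, ← pow_succ'] at expand_yq
    rw [one_div_qPoch_add_two hy' hD, expand_y, expand_yq,
      sum_range_succ' (fun j => qPartialFracCoeff q n j / (1 - y * q ^ j)),
      sum_range_succ (fun j => qPartialFracCoeff q n j / (1 - y * q ^ (j + 1))),
      sum_range_succ' (fun j => qPartialFracCoeff q (n + 1) j / (1 - y * q ^ j)),
      sum_range_succ (fun j => qPartialFracCoeff q (n + 1) (j + 1) / (1 - y * q ^ (j + 1))),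
      qPartialFracCoeff_succ_zero hq, qPartialFracCoeff_succ_self hq]
    have pascal : ∀ j ∈ range n, qPartialFracCoeff q (n + 1) (j + 1) / (1 - y * q ^ (j + 1)) =
        (qPartialFracCoeff q n (j + 1) / (1 - y * q ^ (j + 1)) -
          q ^ (n + 1) * (qPartialFracCoeff q n j / (1 - y * q ^ (j + 1)))) / (1 - q ^ (n + 1)) :=
      fun j hj => by rw [qPartialFracCoeff_succ_succ hq (mem_range.mp hj)]; ring
    rw [sum_congr rfl pascal, ← sum_div, sum_sub_distrib, ← mul_sum]
    ring

lemma sum_div_qPoch_eq_sum_sum (hq : ∀ j, 1 ≤ j → q ^ j ≠ 1) (c : ℕ → ℂ) {m n : ℕ} {x p : ℂ}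
    (hx : ∀ k ≤ m, ∀ j ≤ n, 1 - x * p ^ k * q ^ j ≠ 0) :
    ∑ k ∈ range (m + 1), c k / qPoch (x * p ^ k) q (n + 1) =
      ∑ k ∈ range (m + 1), ∑ j ∈ range (n + 1),
        c k * qPartialFracCoeff q n j / (1 - x * p ^ k * q ^ j) := by
  refine sum_congr rfl fun k hk => ?_
  rw [div_eq_mul_one_div, one_div_qPoch_eq_sum hq n (hx k (mem_range_succ_iff.mp hk)), mul_sum]
  simp only [mul_div_assoc]

end PartialFractions

theorem stmt2_general (m n : ℕ) (x p q : ℂ)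
    (hp1 : ∀ j, 1 ≤ j → p ^ j ≠ 1) (hq1 : ∀ j, 1 ≤ j → q ^ j ≠ 1)
    (hx1 : ∀ k ≤ m, qPoch (x * p ^ k) q (n + 1) ≠ 0) :
    ∑ k ∈ Finset.range (m + 1),
        (-1 : ℂ) ^ k * p ^ (k * (k + 1) / 2) /
          (qPoch p p k * qPoch p p (m - k) * qPoch (x * p ^ k) q (n + 1))
      = ∑ k ∈ Finset.range (n + 1),
          (-1 : ℂ) ^ k * q ^ (k * (k + 1) / 2) /
            (qPoch q q k * qPoch q q (n - k) * qPoch (x * q ^ k) p (m + 1)) := by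
  have hx : ∀ k ≤ m, ∀ j ≤ n, 1 - x * p ^ k * q ^ j ≠ 0 := fun k hk j hj =>
    qPoch_ne_zero_iff.mp (hx1 k hk) j (Nat.lt_succ_of_le hj)
  have hx' : ∀ j ≤ n, ∀ k ≤ m, 1 - x * q ^ j * p ^ k ≠ 0 := fun j hj k hk => by
    simpa only [mul_right_comm] using hx k hk j hj
  calc _ = ∑ k ∈ range (m + 1), qPartialFracCoeff p m k / qPoch (x * p ^ k) q (n + 1) := by
        simp only [qPartialFracCoeff, div_div]
    _ = ∑ j ∈ range (n + 1), ∑ k ∈ range (m + 1),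
          qPartialFracCoeff q n j * qPartialFracCoeff p m k / (1 - x * q ^ j * p ^ k) := by
        rw [sum_div_qPoch_eq_sum_sum hq1 _ hx, sum_comm]
        exact sum_congr rfl fun j _ => sum_congr rfl fun k _ => by ring
    _ = ∑ j ∈ range (n + 1), qPartialFracCoeff q n j / qPoch (x * q ^ j) p (m + 1) :=
        (sum_div_qPoch_eq_sum_sum hp1 _ hx').symm
    _ = _ := by simp only [qPartialFracCoeff, div_div]

/-- The symmetric bibasic identity (the case `r = 0`). -/
theorem stmt2 (m n : ℕ) (x p q : ℂ) (hp : p ≠ 0) (hq : q ≠ 0)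
    (hp1 : ∀ j, 1 ≤ j → p ^ j ≠ 1) (hq1 : ∀ j, 1 ≤ j → q ^ j ≠ 1)
    (hx1 : ∀ k ≤ m, qPoch (x * p ^ k) q (n + 1) ≠ 0)
    (hx2 : ∀ k ≤ n, qPoch (x * q ^ k) p (m + 1) ≠ 0) :
    ∑ k ∈ Finset.range (m + 1),
        (-1 : ℂ) ^ k * p ^ (k * (k + 1) / 2) /
          (qPoch p p k * qPoch p p (m - k) * qPoch (x * p ^ k) q (n + 1))
      = ∑ k ∈ Finset.range (n + 1),
          (-1 : ℂ) ^ k * q ^ (k * (k + 1) / 2) /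
            (qPoch q q k * qPoch q q (n - k) * qPoch (x * q ^ k) p (m + 1)) :=
  stmt2_general m n x p q hp1 hq1 hx1
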